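/- Let f : (0,∞) → (0,∞) be continuous, strictly increasing with f(0+)=0 and f(∞)=∞, and suppose f^{-1}(2y) ≤ c·f^{-1}(y) for all y ≥ 1 and some constant c ≥ 1. Let S_t > 0 satisfy E[e^{-xS_t}] = e^{-t f(x)}. Then for r > 0 and 0 < t ≤ 1: (1/(3Γ(1+r)))·[f^{-1}(1/t)]^r ≤ E[S_t^{-r}] ≤ (C/Γ(1+r))·[f^{-1}(1/t)]^r, where C = 1 + Σ_{n=0}^∞ e^{-2^n} c^{(n+1)r} < ∞. -/

import Mathlib

/-!
By Tonelli and `Γ(r) s^{-r} = ∫₀^∞ x^{r-1} e^{-sx} dx`, the Laplace transform turns the negative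
moment into `Γ(r) E[S_t^{-r}] = ∫₀^∞ x^{r-1} e^{-t f(x)} dx`. With `G = f⁻¹(1/t)` we have
`t f ≤ 1` on `(0, G]`, which gives the lower bound `e^{-1} G^r / r` with `e^{-1} ≥ 1/3`. For the
upper bound cut `(G, ∞)` at the points `a_n = f⁻¹(2^n/t)`: on `(a_n, a_{n+1}]` the integrand is at
most `e^{-2^n} x^{r-1}`, and iterating the doubling condition (`2^n/t ≥ 1` as `t ≤ 1`) gives
`a_{n+1} ≤ c^{n+1} G`.
-/

open Real MeasureTheory Set Filter Topology

section Inverse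

variable {f g : ℝ → ℝ}

lemma pos_of_strictMonoOn_Ioi_of_tendsto_zero (hmono : StrictMonoOn f (Ioi 0))
    (h0 : Tendsto f (𝓝[>] 0) (𝓝 0)) {x : ℝ} (hx : 0 < x) : 0 < f x := by
  have hle : 0 ≤ f (x / 2) := by
    refine le_of_tendsto h0 ?_
    filter_upwards [Ioo_mem_nhdsGT (half_pos hx)] with u hu
    exact (hmono hu.1 (half_pos hx) hu.2).le
  exact hle.trans_lt (hmono (half_pos hx) hx (half_lt_self hx))

lemma exists_pos_apply_eq (hcont : ContinuousOn f (Ioi 0)) (h0 : Tendsto f (𝓝[>] 0) (𝓝 0))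
    (hinf : Tendsto f atTop atTop) {y : ℝ} (hy : 0 < y) : ∃ x, 0 < x ∧ f x = y := by
  obtain ⟨x₁, hx₁y, hx₁⟩ :=
    ((h0.eventually (eventually_lt_nhds hy)).and self_mem_nhdsWithin).exists
  obtain ⟨x₂, hx₂y, hx₁₂⟩ := ((hinf.eventually_gt_atTop y).and (eventually_ge_atTop x₁)).exists
  obtain ⟨x, hx, hfx⟩ := intermediate_value_Icc hx₁₂
    (hcont.mono fun z hz => lt_of_lt_of_le hx₁ hz.1) ⟨hx₁y.le, hx₂y.le⟩
  exact ⟨x, lt_of_lt_of_le hx₁ hx.1, hfx⟩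

lemma pos_of_leftInvOn_of_tendsto (hcont : ContinuousOn f (Ioi 0)) (h0 : Tendsto f (𝓝[>] 0) (𝓝 0))
    (hinf : Tendsto f atTop atTop) (hinv : ∀ x, 0 < x → g (f x) = x) {y : ℝ} (hy : 0 < y) :
    0 < g y := by
  obtain ⟨x, hx, rfl⟩ := exists_pos_apply_eq hcont h0 hinf hy
  rwa [hinv x hx]

lemma apply_le_of_le_rightInverse (hmono : StrictMonoOn f (Ioi 0))
    (hinv : ∀ y, 0 < y → f (g y) = y) {x y : ℝ} (hx : 0 < x) (hy : 0 < y) (h : x ≤ g y) :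
    f x ≤ y := by
  simpa only [hinv y hy] using hmono.monotoneOn hx (hx.trans_le h) h

lemma lt_apply_of_rightInverse_lt (hmono : StrictMonoOn f (Ioi 0))
    (hinv : ∀ y, 0 < y → f (g y) = y) {x y : ℝ} (hy : 0 < y) (hgy : 0 < g y) (h : g y < x) :
    y < f x := by
  simpa only [hinv y hy] using hmono hgy (hgy.trans h) h

lemma le_pow_mul_of_doubling {c : ℝ} (hc : 0 ≤ c) (hdbl : ∀ y, 1 ≤ y → g (2 * y) ≤ c * g y)
    {y : ℝ} (hy : 1 ≤ y) : ∀ n : ℕ, g (2 ^ n * y) ≤ c ^ n * g y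
  | 0 => by simp
  | n + 1 => calc
      g (2 ^ (n + 1) * y) = g (2 * (2 ^ n * y)) := by rw [pow_succ', mul_assoc]
      _ ≤ c * g (2 ^ n * y) := hdbl _ (one_le_mul_of_one_le_of_one_le (one_le_pow₀ one_le_two) hy)
      _ ≤ c * (c ^ n * g y) := mul_le_mul_of_nonneg_left (le_pow_mul_of_doubling hc hdbl hy n) hc
      _ = c ^ (n + 1) * g y := by ring

end Inverse

lemma Ioi_subset_iUnion_Ioc {α : Type*} [LinearOrder α] {a : ℕ → α}
    (h : ∀ x, a 0 < x → ∃ n, x ≤ a n) : Ioi (a 0) ⊆ ⋃ n, Ioc (a n) (a (n + 1)) := by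
  intro x hx
  obtain ⟨N, hN⟩ := h x hx
  obtain ⟨i, -, hi⟩ := mem_iUnion₂.1 (Ioc_subset_biUnion_Ioc N a ⟨hx, hN⟩)
  exact mem_iUnion.2 ⟨i, hi⟩

lemma summable_exp_neg_two_pow_mul_rpow {c : ℝ} (hc : 0 < c) (r : ℝ) :
    Summable fun m : ℕ => exp (-(2 : ℝ) ^ m) * c ^ (((m : ℝ) + 1) * r) := by
  refine summable_of_ratio_test_tendsto_lt_one (l := 0) one_pos
    (Eventually.of_forall fun n => by positivity) ?_
  have hratio : (fun n : ℕ => ‖exp (-(2 : ℝ) ^ (n + 1)) * c ^ (((↑(n + 1) : ℝ) + 1) * r)‖ /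
      ‖exp (-(2 : ℝ) ^ n) * c ^ (((n : ℝ) + 1) * r)‖) = fun n => exp (-(2 : ℝ) ^ n) * c ^ r := by
    funext n
    rw [norm_of_nonneg (by positivity), norm_of_nonneg (by positivity), div_eq_iff (by positivity),
      Nat.cast_succ, show ((n : ℝ) + 1 + 1) * r = ((n : ℝ) + 1) * r + r by ring, rpow_add hc,
      pow_succ, mul_two, neg_add, exp_add]
    ring
  rw [hratio]
  simpa using (tendsto_exp_atBot.comp (tendsto_neg_atTop_atBot.comp
    (tendsto_pow_atTop_atTop_of_one_lt one_lt_two))).mul_const (c ^ r)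

lemma lintegral_Ioc_rpow_sub_one {r b : ℝ} (hr : 0 < r) (hb : 0 ≤ b) :
    ∫⁻ x in Ioc 0 b, ENNReal.ofReal (x ^ (r - 1)) = ENNReal.ofReal (b ^ r / r) := by
  have hint : IntegrableOn (fun x : ℝ => x ^ (r - 1)) (Ioc 0 b) := by
    have h := intervalIntegral.intervalIntegrable_rpow' (a := 0) (b := b) (r := r - 1)
      (by linarith)
    rwa [intervalIntegrable_iff, uIoc_of_le hb] at h
  rw [← ofReal_integral_eq_lintegral_ofReal hint
    (ae_restrict_of_forall_mem measurableSet_Ioc fun x hx => rpow_nonneg hx.1.le _),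
    ← intervalIntegral.integral_of_le hb, integral_rpow (Or.inl (by linarith)),
    sub_add_cancel, zero_rpow hr.ne', sub_zero]

lemma lintegral_Ioi_rpow_sub_one_mul_exp_neg_mul {r s : ℝ} (hr : 0 < r) (hs : 0 < s) :
    ∫⁻ x in Ioi 0, ENNReal.ofReal (x ^ (r - 1) * exp (-s * x)) =
      ENNReal.ofReal (Gamma r * s ^ (-r)) := by
  have hint := integrableOn_rpow_mul_exp_neg_mul_rpow (by linarith : -1 < r - 1) one_pos hs
  have hval := integral_rpow_mul_exp_neg_mul_rpow one_pos (by linarith : -1 < r - 1) hs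
  simp only [rpow_one, sub_add_cancel, div_one, mul_one] at hint hval
  rw [← ofReal_integral_eq_lintegral_ofReal hint
    (ae_restrict_of_forall_mem measurableSet_Ioi fun x hx =>
      mul_nonneg (rpow_nonneg (le_of_lt hx) _) (exp_pos _).le), hval, mul_comm]

section NegativeMoments

variable {Ω : Type*} [MeasurableSpace Ω] {μ : Measure Ω} {X : Ω → ℝ}

lemma aemeasurable_of_integral_exp_neg_ne_zero (h : ∫ ω, exp (-X ω) ∂μ ≠ 0) :
    AEMeasurable X μ := by
  have hexp : AEMeasurable (fun ω => exp (-X ω)) μ :=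
    (Integrable.of_integral_ne_zero h).aemeasurable
  refine (measurable_log.comp_aemeasurable hexp).neg.congr (Eventually.of_forall fun ω => ?_)
  simp

lemma ofReal_Gamma_mul_lintegral_rpow_neg [SFinite μ] (hX : AEMeasurable X μ)
    (hpos : ∀ ω, 0 < X ω) {r : ℝ} (hr : 0 < r) :
    ENNReal.ofReal (Gamma r) * ∫⁻ ω, ENNReal.ofReal (X ω ^ (-r)) ∂μ =
      ∫⁻ x in Ioi (0 : ℝ), ∫⁻ ω, ENNReal.ofReal (x ^ (r - 1) * exp (-X ω * x)) ∂μ := by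
  rw [← lintegral_const_mul' _ _ ENNReal.ofReal_ne_top]
  calc ∫⁻ ω, ENNReal.ofReal (Gamma r) * ENNReal.ofReal (X ω ^ (-r)) ∂μ
      = ∫⁻ ω, (∫⁻ x in Ioi (0 : ℝ), ENNReal.ofReal (x ^ (r - 1) * exp (-X ω * x))) ∂μ := by
        refine lintegral_congr fun ω => ?_
        rw [lintegral_Ioi_rpow_sub_one_mul_exp_neg_mul hr (hpos ω),
          ENNReal.ofReal_mul (Gamma_pos_of_pos hr).le]
    _ = _ := by
        apply lintegral_lintegral_swap
        have := hX.comp_fst (ν := volume.restrict (Ioi (0 : ℝ)))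
        fun_prop

variable [IsFiniteMeasure μ]

lemma ofReal_Gamma_mul_lintegral_rpow_neg_of_laplace (hpos : ∀ ω, 0 < X ω) {φ : ℝ → ℝ}
    (hlap : ∀ x, 0 < x → ∫ ω, exp (-x * X ω) ∂μ = exp (-φ x)) {r : ℝ} (hr : 0 < r) :
    ENNReal.ofReal (Gamma r) * ∫⁻ ω, ENNReal.ofReal (X ω ^ (-r)) ∂μ =
      ∫⁻ x in Ioi (0 : ℝ), ENNReal.ofReal (x ^ (r - 1) * exp (-φ x)) := by
  have hX : AEMeasurable X μ := aemeasurable_of_integral_exp_neg_ne_zero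
    (by simpa using (hlap 1 one_pos).trans_ne (exp_pos _).ne')
  rw [ofReal_Gamma_mul_lintegral_rpow_neg hX hpos hr]
  refine setLIntegral_congr_fun measurableSet_Ioi fun x (hx : 0 < x) => ?_
  have hint : Integrable (fun ω => exp (-x * X ω)) μ := by
    refine (integrable_const 1).mono'
      (measurable_exp.comp_aemeasurable (hX.const_mul _)).aestronglyMeasurable
      (Eventually.of_forall fun ω => ?_)
    rw [norm_of_nonneg (exp_pos _).le, exp_le_one_iff]
    nlinarith [hpos ω]
  simp_rw [ENNReal.ofReal_mul (rpow_nonneg hx.le _), neg_mul, mul_comm (X _) x, ← neg_mul]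
  rw [lintegral_const_mul' _ _ ENNReal.ofReal_ne_top, ← ofReal_integral_eq_lintegral_ofReal hint
    (Eventually.of_forall fun ω => (exp_pos _).le), hlap x hx]

lemma integrable_rpow_neg_of_laplace (hpos : ∀ ω, 0 < X ω) {φ : ℝ → ℝ}
    (hlap : ∀ x, 0 < x → ∫ ω, exp (-x * X ω) ∂μ = exp (-φ x)) {r : ℝ} (hr : 0 < r)
    (hfin : ∫⁻ x in Ioi (0 : ℝ), ENNReal.ofReal (x ^ (r - 1) * exp (-φ x)) ≠ ⊤) :
    Integrable (fun ω => X ω ^ (-r)) μ ∧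
      Gamma r * ∫ ω, X ω ^ (-r) ∂μ =
        (∫⁻ x in Ioi (0 : ℝ), ENNReal.ofReal (x ^ (r - 1) * exp (-φ x))).toReal := by
  have hX : AEMeasurable X μ := aemeasurable_of_integral_exp_neg_ne_zero
    (by simpa using (hlap 1 one_pos).trans_ne (exp_pos _).ne')
  have hmoment := ofReal_Gamma_mul_lintegral_rpow_neg_of_laplace hpos hlap hr
  have hnonneg : 0 ≤ᵐ[μ] fun ω => X ω ^ (-r) :=
    Eventually.of_forall fun ω => rpow_nonneg (hpos ω).le _
  have hmeas : AEStronglyMeasurable (fun ω => X ω ^ (-r)) μ :=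
    (hX.pow_const _).aestronglyMeasurable
  have hL : ∫⁻ ω, ENNReal.ofReal (X ω ^ (-r)) ∂μ < ⊤ := by
    rw [← hmoment] at hfin
    exact ENNReal.lt_top_of_mul_ne_top_right hfin
      (ENNReal.ofReal_pos.2 (Gamma_pos_of_pos hr)).ne'
  refine ⟨⟨hmeas, (hasFiniteIntegral_iff_ofReal hnonneg).2 hL⟩, ?_⟩
  rw [integral_eq_lintegral_of_nonneg_ae hnonneg hmeas, ← hmoment, ENNReal.toReal_mul,
    ENNReal.toReal_ofReal (Gamma_pos_of_pos hr).le]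

end NegativeMoments

section DyadicBounds

variable {φ : ℝ → ℝ} {r : ℝ}

lemma ofReal_exp_neg_one_mul_le_lintegral_rpow_mul_exp_neg (hr : 0 < r) {G : ℝ} (hG : 0 ≤ G)
    (hφ : ∀ x ∈ Ioc 0 G, φ x ≤ 1) :
    ENNReal.ofReal (exp (-1) * (G ^ r / r)) ≤
      ∫⁻ x in Ioi (0 : ℝ), ENNReal.ofReal (x ^ (r - 1) * exp (-φ x)) := calc
  ENNReal.ofReal (exp (-1) * (G ^ r / r))
      = ∫⁻ x in Ioc 0 G, ENNReal.ofReal (exp (-1)) * ENNReal.ofReal (x ^ (r - 1)) := by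
        rw [lintegral_const_mul' _ _ ENNReal.ofReal_ne_top, lintegral_Ioc_rpow_sub_one hr hG,
          ENNReal.ofReal_mul (exp_pos _).le]
  _ ≤ ∫⁻ x in Ioc 0 G, ENNReal.ofReal (x ^ (r - 1) * exp (-φ x)) := by
        refine setLIntegral_mono' measurableSet_Ioc fun x hx => ?_
        rw [← ENNReal.ofReal_mul (exp_pos _).le, mul_comm]
        gcongr
        · exact rpow_nonneg hx.1.le _
        · linarith [hφ x hx]
  _ ≤ _ := lintegral_mono_set Ioc_subset_Ioi_self

lemma lintegral_rpow_mul_exp_neg_le_of_dyadic (hr : 0 < r) {a b : ℕ → ℝ} (ha : ∀ n, 0 ≤ a n)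
    (hcover : ∀ x, a 0 < x → ∃ n, x ≤ a n) (hφ₀ : ∀ x, 0 < x → 0 ≤ φ x)
    (hφ : ∀ n x, a n < x → b n ≤ φ x) :
    ∫⁻ x in Ioi (0 : ℝ), ENNReal.ofReal (x ^ (r - 1) * exp (-φ x)) ≤
      ENNReal.ofReal (a 0 ^ r / r) + ∑' n, ENNReal.ofReal (exp (-b n) * (a (n + 1) ^ r / r)) := by
  set F := fun x : ℝ => ENNReal.ofReal (x ^ (r - 1) * exp (-φ x))
  have hF : ∀ x, 0 < x → ∀ β ≤ φ x,
      F x ≤ ENNReal.ofReal (exp (-β)) * ENNReal.ofReal (x ^ (r - 1)) := fun x hx β hβ => by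
    rw [← ENNReal.ofReal_mul (exp_pos _).le, mul_comm (exp _)]
    simp only [F]
    gcongr
  have hpiece : ∀ n, ∫⁻ x in Ioc (a n) (a (n + 1)), F x ≤
      ENNReal.ofReal (exp (-b n) * (a (n + 1) ^ r / r)) := fun n => calc
    ∫⁻ x in Ioc (a n) (a (n + 1)), F x
        ≤ ∫⁻ x in Ioc (a n) (a (n + 1)),
            ENNReal.ofReal (exp (-b n)) * ENNReal.ofReal (x ^ (r - 1)) :=
          setLIntegral_mono' measurableSet_Ioc fun x hx =>
            hF x ((ha n).trans_lt hx.1) _ (hφ n x hx.1)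
    _ ≤ ∫⁻ x in Ioc 0 (a (n + 1)), ENNReal.ofReal (exp (-b n)) * ENNReal.ofReal (x ^ (r - 1)) :=
          lintegral_mono_set (Ioc_subset_Ioc_left (ha n))
    _ = _ := by
          rw [lintegral_const_mul' _ _ ENNReal.ofReal_ne_top,
            lintegral_Ioc_rpow_sub_one hr (ha _), ENNReal.ofReal_mul (exp_pos _).le]
  have hpiece₀ : ∫⁻ x in Ioc 0 (a 0), F x ≤ ENNReal.ofReal (a 0 ^ r / r) := by
    rw [← lintegral_Ioc_rpow_sub_one hr (ha 0)]
    refine setLIntegral_mono' measurableSet_Ioc fun x hx => ?_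
    simpa using hF x hx.1 0 (hφ₀ x hx.1)
  calc ∫⁻ x in Ioi (0 : ℝ), F x
      ≤ ∫⁻ x in Ioc 0 (a 0) ∪ ⋃ n, Ioc (a n) (a (n + 1)), F x := by
        refine lintegral_mono_set ?_
        rw [← Ioc_union_Ioi_eq_Ioi (ha 0)]
        exact union_subset_union_right _ (Ioi_subset_iUnion_Ioc hcover)
    _ ≤ (∫⁻ x in Ioc 0 (a 0), F x) + ∑' n, ∫⁻ x in Ioc (a n) (a (n + 1)), F x :=
        (lintegral_union_le _ _ _).trans (add_le_add le_rfl (lintegral_iUnion_le _ _))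
    _ ≤ _ := add_le_add hpiece₀ (ENNReal.tsum_le_tsum hpiece)

end DyadicBounds

lemma lintegral_rpow_mul_exp_neg_mul_le_of_doubling {f g : ℝ → ℝ} (hmono : StrictMonoOn f (Ioi 0))
    (hf : ∀ x, 0 < x → 0 < f x) (hg : ∀ y, 0 < y → 0 < g y)
    (hinv : ∀ y, 0 < y → f (g y) = y) {c : ℝ} (hc : 0 < c)
    (hdbl : ∀ y, 1 ≤ y → g (2 * y) ≤ c * g y) {r t : ℝ} (hr : 0 < r) (ht0 : 0 < t) (ht1 : t ≤ 1) :
    ∫⁻ x in Ioi (0 : ℝ), ENNReal.ofReal (x ^ (r - 1) * exp (-(t * f x))) ≤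
      ENNReal.ofReal ((1 + ∑' m : ℕ, exp (-(2 : ℝ) ^ m) * c ^ (((m : ℝ) + 1) * r)) *
        (g (1 / t) ^ r / r)) := by
  set a : ℕ → ℝ := fun n => g (2 ^ n * (1 / t))
  have ha : ∀ n, 0 < a n := fun n => hg _ (by positivity)
  have hlt : ∀ n x, a n < x → 2 ^ n < t * f x := fun n x hx => by
    have := lt_apply_of_rightInverse_lt hmono hinv (by positivity) (ha n) hx
    rwa [mul_one_div, div_lt_iff₀ ht0, mul_comm] at this
  have hcover : ∀ x, a 0 < x → ∃ n, x ≤ a n := fun x hx => by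
    obtain ⟨n, hn⟩ := pow_unbounded_of_one_lt (t * f x) one_lt_two
    exact ⟨n, le_of_not_gt fun h => (hlt n x h).not_gt hn⟩
  have hG : 0 < g (1 / t) := hg _ (by positivity)
  have hGr : 0 ≤ g (1 / t) ^ r / r := div_nonneg (rpow_nonneg hG.le _) hr.le
  have hterm (n : ℕ) : ENNReal.ofReal (exp (-(2 : ℝ) ^ n) * (a (n + 1) ^ r / r)) ≤
      ENNReal.ofReal (exp (-(2 : ℝ) ^ n) * c ^ (((n : ℝ) + 1) * r) * (g (1 / t) ^ r / r)) := by
    have hgrowth : a (n + 1) ≤ c ^ (n + 1) * g (1 / t) :=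
      le_pow_mul_of_doubling hc.le hdbl (one_le_one_div ht0 ht1) _
    have hpow : (c ^ (n + 1) * g (1 / t)) ^ r = c ^ (((n : ℝ) + 1) * r) * g (1 / t) ^ r := by
      rw [mul_rpow (by positivity) hG.le, ← rpow_natCast, ← rpow_mul hc.le]
      push_cast
      rfl
    refine ENNReal.ofReal_le_ofReal ?_
    calc exp (-(2 : ℝ) ^ n) * (a (n + 1) ^ r / r)
        ≤ exp (-(2 : ℝ) ^ n) * ((c ^ (n + 1) * g (1 / t)) ^ r / r) := by
          gcongr
          exact (ha _).le
      _ = _ := by rw [hpow]; ring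
  refine (lintegral_rpow_mul_exp_neg_le_of_dyadic hr (fun n => (ha n).le) hcover
    (fun x hx => (mul_pos ht0 (hf x hx)).le) fun n x hx => (hlt n x hx).le).trans ?_
  have hsum := (summable_exp_neg_two_pow_mul_rpow hc r).mul_right (g (1 / t) ^ r / r)
  have hnonneg (n : ℕ) : 0 ≤ exp (-(2 : ℝ) ^ n) * c ^ (((n : ℝ) + 1) * r) * (g (1 / t) ^ r / r) :=
    mul_nonneg (by positivity) hGr
  rw [show a 0 = g (1 / t) by simp [a], add_mul, one_mul, tsum_mul_right.symm,
    ENNReal.ofReal_add hGr (tsum_nonneg hnonneg), ENNReal.ofReal_tsum_of_nonneg hnonneg hsum]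
  exact add_le_add le_rfl (ENNReal.tsum_le_tsum hterm)

lemma one_div_three_mul_Gamma_one_add_mul_le {r M E : ℝ} (hr : 0 < r) (hM : 0 ≤ M)
    (h : exp (-1) * (M / r) ≤ Gamma r * E) : 1 / (3 * Gamma (1 + r)) * M ≤ E := by
  have hexp : (1 : ℝ) / 3 ≤ exp (-1) := by
    rw [exp_neg, one_div]
    exact inv_anti₀ (exp_pos 1) (exp_one_lt_d9.le.trans (by norm_num))
  rw [add_comm, Gamma_add_one hr.ne', div_mul_eq_mul_div, one_mul, div_le_iff₀ (by positivity)]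
  calc M = 3 * r * (1 / 3 * (M / r)) := by field_simp
    _ ≤ 3 * r * (Gamma r * E) :=
        mul_le_mul_of_nonneg_left ((mul_le_mul_of_nonneg_right hexp (by positivity)).trans h)
          (by positivity)
    _ = E * (3 * (r * Gamma r)) := by ring

lemma le_div_Gamma_one_add_mul {r M E C : ℝ} (hr : 0 < r) (h : Gamma r * E ≤ C * (M / r)) :
    E ≤ C / Gamma (1 + r) * M := by
  rw [add_comm, Gamma_add_one hr.ne', div_mul_eq_mul_div, le_div_iff₀ (by positivity)]
  calc E * (r * Gamma r) = r * (Gamma r * E) := by ring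
    _ ≤ r * (C * (M / r)) := by gcongr
    _ = C * M := by field_simp

/-- Two-sided bounds for negative moments of a subordinator in terms of the inverse
of its Bernstein function, under a doubling condition on the inverse. -/
theorem stmt14 {Ω : Type*} [MeasureSpace Ω] (P : Measure Ω) [IsProbabilityMeasure P]
    (f g : ℝ → ℝ)
    (hfcont : ContinuousOn f (Set.Ioi 0)) (hfmono : StrictMonoOn f (Set.Ioi 0))
    (hf0 : Filter.Tendsto f (nhdsWithin 0 (Set.Ioi 0)) (nhds 0))
    (hfinf : Filter.Tendsto f Filter.atTop Filter.atTop)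
    (hinv1 : ∀ y, 0 < y → f (g y) = y) (hinv2 : ∀ x, 0 < x → g (f x) = x)
    (c : ℝ) (hc : 1 ≤ c) (hdbl : ∀ y, 1 ≤ y → g (2 * y) ≤ c * g y)
    (S : ℝ → Ω → ℝ) (hpos : ∀ t ω, 0 < t → 0 < S t ω)
    (hlap : ∀ x : ℝ, 0 < x → ∀ t : ℝ, 0 < t →
      ∫ ω, Real.exp (-x * S t ω) ∂P = Real.exp (-t * f x))
    (r t : ℝ) (hr : 0 < r) (ht0 : 0 < t) (ht1 : t ≤ 1) :
    Integrable (fun ω => (S t ω) ^ (-r)) P ∧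
    (1 / (3 * Real.Gamma (1 + r))) * (g (1 / t)) ^ r ≤ ∫ ω, (S t ω) ^ (-r) ∂P ∧
    (∫ ω, (S t ω) ^ (-r) ∂P)
      ≤ ((1 + ∑' m : ℕ, Real.exp (-(2:ℝ) ^ m) * c ^ (((m : ℝ) + 1) * r))
          / Real.Gamma (1 + r)) * (g (1 / t)) ^ r := by
  have hf (x) (hx : 0 < x) : 0 < f x := pos_of_strictMonoOn_Ioi_of_tendsto_zero hfmono hf0 hx
  have hg (y) (hy : 0 < y) : 0 < g y := pos_of_leftInvOn_of_tendsto hfcont hf0 hfinf hinv2 hy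
  have hG : 0 < g (1 / t) := hg _ (by positivity)
  have hlap' (x) (hx : 0 < x) : ∫ ω, exp (-x * S t ω) ∂P = exp (-(t * f x)) := by
    rw [hlap x hx t ht0, neg_mul]
  have hup := lintegral_rpow_mul_exp_neg_mul_le_of_doubling hfmono hf hg hinv1
    (one_pos.trans_le hc) hdbl hr ht0 ht1
  have hlow := ofReal_exp_neg_one_mul_le_lintegral_rpow_mul_exp_neg (φ := fun x => t * f x) hr
    hG.le fun x hx => by
      have := apply_le_of_le_rightInverse hfmono hinv1 hx.1 (by positivity) hx.2
      rwa [le_div_iff₀ ht0, mul_comm] at this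
  have hfin := ne_top_of_le_ne_top ENNReal.ofReal_ne_top hup
  obtain ⟨hint, hmoment⟩ := integrable_rpow_neg_of_laplace (fun ω => hpos t ω ht0) hlap' hr hfin
  have hGr : 0 ≤ g (1 / t) ^ r / r := div_nonneg (rpow_nonneg hG.le _) hr.le
  refine ⟨hint, one_div_three_mul_Gamma_one_add_mul_le hr (rpow_nonneg hG.le _) ?_,
    le_div_Gamma_one_add_mul hr ?_⟩
  · rw [hmoment]
    exact (ENNReal.ofReal_le_iff_le_toReal hfin).1 hlow
  · rw [hmoment]
    exact ENNReal.toReal_le_of_le_ofReal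
      (mul_nonneg (add_nonneg zero_le_one (tsum_nonneg fun m => by positivity)) hGr) hup
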